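/- Let m ≥ 2, let G_l be the l-th branch of the m-th root, and define 𝔊^l_{a₁,a₂} as above. Then for every n ≥ 1 and all integers a₁, a₂: (d^n/ds^n) 𝔊^l_{a₁,a₂}(u,s) = iⁿ n! Σ_{0≤j≤n} (−1)^{n−j} C(−a₁/m, j) C(−a₂/m, n−j) 𝔊^l_{a₁+jm, a₂+(n−j)m}(u,s) for all (u,s) ∈ [-1,1]² with s ≠ 0, where C(z,k) is the generalized binomial coefficient. -/

import Mathlib

/-- The argument of a complex number, taken in `[0, 2π)`. -/
noncomputable def argTwoPi (z : ℂ) : ℝ := if 0 ≤ z.arg then z.arg else z.arg + 2 * Real.pi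

/-- The principal branch `G₀` of the `m`-th root:
`G₀(r e^{it}) = r^{1/m} e^{it/m}` for `t ∈ [0, 2π)`. -/
noncomputable def rootBranch (m : ℕ) (z : ℂ) : ℂ :=
  ((‖z‖ ^ ((1 : ℝ) / m) : ℝ) : ℂ) * Complex.exp (Complex.I * ((argTwoPi z / m : ℝ) : ℂ))

/-- The `l`-th branch `G_l = θ^l G₀` of the `m`-th root, where `θ = e^{2πi/m}`. -/
noncomputable def Gl (m l : ℕ) (z : ℂ) : ℂ :=
  Complex.exp (2 * (Real.pi : ℂ) * Complex.I / m) ^ l * rootBranch m z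

/-- The function `𝔊^l_{a₁,a₂}(u,s) = ∫_{-1}^u G_l(v+is)^{-a₁} conj(G_l(v+is))^{-a₂} dv`. -/
noncomputable def frakG (m l : ℕ) (a₁ a₂ : ℤ) (u s : ℝ) : ℂ :=
  ∫ v in (-1:ℝ)..u,
    Gl m l ((v : ℂ) + Complex.I * (s : ℂ)) ^ (-a₁) *
      (starRingEnd ℂ) (Gl m l ((v : ℂ) + Complex.I * (s : ℂ))) ^ (-a₂)

/-- The generalized binomial coefficient `C(z, n) = z(z-1)⋯(z-n+1)/n!`. -/
noncomputable def genBinom (z : ℝ) (n : ℕ) : ℝ :=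
  (∏ i ∈ Finset.range n, (z - (i : ℝ))) / (Nat.factorial n : ℝ)

/-!
Off the real axis `G_l` agrees locally with a constant multiple of the principal power `z ^ (1/m)`,
so it is holomorphic there, and differentiating `G_l ^ m = z` gives `G_l' = G_l ^ (1 - m) / m`.
Since `d/ds = i ∂_z` on `G_l` and `-i ∂_z̄` on its conjugate, differentiating under the integral
sign (the `s`-derivative of the integrand is jointly continuous, hence bounded on compact sets
away from `s = 0`) gives
`d/ds 𝔊_{a₁,a₂} = i (-(a₁/m) 𝔊_{a₁+m,a₂} + (a₂/m) 𝔊_{a₁,a₂+m})`.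
Iterating, the coefficients obey `(j + 1) C(x, j + 1) = (x - j) C(x, j)`, and summing over the
antidiagonal `j + k = n` the two shifted sums recombine into `(n + 1)` times the next one.
-/

open Complex Filter Topology

lemma argTwoPi_sub_arg (z : ℂ) :
    argTwoPi z - arg z = if 0 ≤ z.im then 0 else 2 * Real.pi := by
  simp only [argTwoPi, arg_nonneg_iff]
  split_ifs <;> ring

lemma rootBranch_eq_exp_mul_cpow (m : ℕ) {z : ℂ} (hz : z ≠ 0) :
    rootBranch m z = exp (I * ((argTwoPi z - arg z) / m : ℝ)) * z ^ ((m : ℂ)⁻¹) := by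
  rw [rootBranch, cpow_def_of_ne_zero hz, Real.rpow_def_of_pos (norm_pos_iff.mpr hz),
    ofReal_exp, ← exp_add, ← exp_add, log]
  congr 1
  push_cast
  ring

lemma exp_two_pi_I_div_pow (m : ℕ) (hm : m ≠ 0) :
    exp (2 * Real.pi * I / m) ^ m = 1 := by
  rw [← exp_nat_mul, mul_div_cancel₀ _ (Nat.cast_ne_zero.mpr hm), exp_two_pi_mul_I]

lemma Gl_pow (m l : ℕ) (hm : m ≠ 0) (z : ℂ) : Gl m l z ^ m = z := by
  rcases eq_or_ne z 0 with rfl | hz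
  · simp [Gl, rootBranch, hm]
  have hexp : exp (I * ((argTwoPi z - arg z) / m : ℝ)) ^ m = 1 := by
    rw [← exp_nat_mul, argTwoPi_sub_arg]
    split_ifs
    · simp
    · push_cast
      rw [← exp_two_pi_I_div_pow m hm, ← exp_nat_mul]
      ring_nf
  rw [Gl, rootBranch_eq_exp_mul_cpow m hz, mul_pow, mul_pow, ← pow_mul, mul_comm l, pow_mul,
    exp_two_pi_I_div_pow m hm, hexp, cpow_nat_inv_pow z hm, one_pow, one_mul, one_mul]

lemma Gl_ne_zero (m l : ℕ) (hm : m ≠ 0) {z : ℂ} (hz : z ≠ 0) : Gl m l z ≠ 0 := fun h =>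
  hz (by rw [← Gl_pow m l hm z, h, zero_pow hm])

lemma ne_zero_of_im_ne_zero {z : ℂ} (hz : z.im ≠ 0) : z ≠ 0 := by
  rintro rfl
  exact hz rfl

lemma eventually_im_nonneg_iff {z : ℂ} (hz : z.im ≠ 0) :
    ∀ᶠ w in 𝓝 z, (0 ≤ w.im ↔ 0 ≤ z.im) := by
  have hcont := continuous_im.tendsto z
  rcases hz.lt_or_gt with hneg | hpos
  · filter_upwards [hcont.eventually (eventually_lt_nhds hneg)] with w hw
    simp only [not_le.mpr hw, not_le.mpr hneg]
  · filter_upwards [hcont.eventually (eventually_gt_nhds hpos)] with w hw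
    simp only [hw.le, hpos.le]

lemma Gl_eventuallyEq_const_mul_cpow (m l : ℕ) {z : ℂ} (hz : z.im ≠ 0) :
    ∃ c : ℂ, Gl m l =ᶠ[𝓝 z] fun w => c * w ^ ((m : ℂ)⁻¹) := by
  refine ⟨exp (2 * Real.pi * I / m) ^ l * exp (I * ((argTwoPi z - arg z) / m : ℝ)), ?_⟩
  filter_upwards [eventually_im_nonneg_iff hz, eventually_ne_nhds (ne_zero_of_im_ne_zero hz)]
    with w hw hw0
  rw [Gl, rootBranch_eq_exp_mul_cpow m hw0, argTwoPi_sub_arg, argTwoPi_sub_arg, if_congr hw rfl rfl,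
    ← mul_assoc]

lemma differentiableAt_Gl (m l : ℕ) {z : ℂ} (hz : z.im ≠ 0) : DifferentiableAt ℂ (Gl m l) z := by
  obtain ⟨c, hc⟩ := Gl_eventuallyEq_const_mul_cpow m l hz
  refine DifferentiableAt.congr_of_eventuallyEq ?_ hc
  exact (differentiableAt_id.cpow_const (Or.inr hz)).const_mul c

theorem DifferentiableAt.hasDerivAt_of_pow_eq_self {𝕜 : Type*} [NontriviallyNormedField 𝕜]
    {f : 𝕜 → 𝕜} {z : 𝕜} {m : ℕ} (hf : DifferentiableAt 𝕜 f z) (hpow : ∀ w, f w ^ m = w) :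
    HasDerivAt f ((m : 𝕜)⁻¹ * f z ^ (1 - (m : ℤ))) z := by
  have hid : HasDerivAt (fun w => f w ^ m) 1 z := by
    simpa only [hpow] using hasDerivAt_id' z
  have hchain : (m : 𝕜) * f z ^ (m - 1) * deriv f z = 1 := (hf.hasDerivAt.pow m).unique hid
  have hm : m ≠ 0 := by
    rintro rfl
    simp at hchain
  have hzpow : f z ^ (1 - (m : ℤ)) = (f z ^ (m - 1))⁻¹ := by
    rw [← zpow_natCast, ← zpow_neg, Nat.cast_sub (Nat.one_le_iff_ne_zero.mpr hm)]
    ring_nf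
  rw [hzpow, ← mul_inv, ← eq_inv_of_mul_eq_one_right hchain]
  exact hf.hasDerivAt

lemma hasDerivAt_Gl (m l : ℕ) (hm : m ≠ 0) {z : ℂ} (hz : z.im ≠ 0) :
    HasDerivAt (Gl m l) ((m : ℂ)⁻¹ * Gl m l z ^ (1 - (m : ℤ))) z :=
  (differentiableAt_Gl m l hz).hasDerivAt_of_pow_eq_self (Gl_pow m l hm)

noncomputable def frakGIntegrand (m l : ℕ) (a₁ a₂ : ℤ) (z : ℂ) : ℂ :=
  Gl m l z ^ (-a₁) * (starRingEnd ℂ) (Gl m l z) ^ (-a₂)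

lemma frakG_eq_integral_frakGIntegrand (m l : ℕ) (a₁ a₂ : ℤ) (u s : ℝ) :
    frakG m l a₁ a₂ u s = ∫ v in (-1 : ℝ)..u, frakGIntegrand m l a₁ a₂ (v + I * s) := rfl

lemma continuousAt_frakGIntegrand (m l : ℕ) (hm : m ≠ 0) (a₁ a₂ : ℤ) {z : ℂ} (hz : z.im ≠ 0) :
    ContinuousAt (frakGIntegrand m l a₁ a₂) z := by
  have hG := (differentiableAt_Gl m l hz).continuousAt
  have hG0 := Gl_ne_zero m l hm (ne_zero_of_im_ne_zero hz)
  exact (hG.zpow₀ _ (Or.inl hG0)).mul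
    ((continuous_conj.continuousAt.comp hG).zpow₀ _ (Or.inl ((map_ne_zero _).mpr hG0)))

lemma hasDerivAt_frakGIntegrand_vertical (m l : ℕ) (hm : m ≠ 0) (a₁ a₂ : ℤ) (v : ℝ) {s : ℝ}
    (hs : s ≠ 0) :
    HasDerivAt (fun t : ℝ => frakGIntegrand m l a₁ a₂ (v + I * t))
      (I * (-(a₁ : ℂ) / m * frakGIntegrand m l (a₁ + m) a₂ (v + I * s) +
        (a₂ : ℂ) / m * frakGIntegrand m l a₁ (a₂ + m) (v + I * s))) s := by
  have hz : ((v : ℂ) + I * s).im ≠ 0 := by simpa using hs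
  have hG0 := Gl_ne_zero m l hm (ne_zero_of_im_ne_zero hz)
  have hline : HasDerivAt (fun t : ℝ => (v : ℂ) + I * t) I s := by
    simpa using ((hasDerivAt_id s).ofReal_comp.const_mul I).const_add (v : ℂ)
  have hG := HasDerivAt.comp (h₂ := Gl m l) s (hasDerivAt_Gl m l hm hz) hline
  have h₁ := (hasDerivAt_zpow (-a₁) _ (Or.inl hG0)).comp s hG
  have h₂ := (hasDerivAt_zpow (-a₂) _ (Or.inl (star_ne_zero.mpr hG0))).comp s hG.star
  have h : HasDerivAt (fun t : ℝ => frakGIntegrand m l a₁ a₂ (v + I * t)) _ s := h₁.mul h₂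
  refine h.congr_deriv ?_
  simp only [frakGIntegrand, Function.comp_apply, star_mul', star_zpow₀, star_inv₀,
    Complex.star_def, conj_I, map_natCast]
  set G := Gl m l (v + I * s)
  have e₁ : G ^ (-(a₁ + m)) = G ^ (-a₁ - 1) * G ^ (1 - (m : ℤ)) := by
    rw [← zpow_add₀ hG0]; ring_nf
  have e₂ : (starRingEnd ℂ G) ^ (-(a₂ + m)) =
      (starRingEnd ℂ G) ^ (-a₂ - 1) * (starRingEnd ℂ G) ^ (1 - (m : ℤ)) := by
    rw [← zpow_add₀ ((map_ne_zero _).mpr hG0)]; ring_nf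
  rw [e₁, e₂]
  push_cast
  ring

open Set intervalIntegral MeasureTheory Interval in
theorem hasDerivAt_intervalIntegral_of_continuousOn {𝕜 E : Type*} [RCLike 𝕜]
    [NormedAddCommGroup E] [NormedSpace ℝ E] [NormedSpace 𝕜 E] {F F' : 𝕜 → ℝ → E}
    {x₀ : 𝕜} {K : Set 𝕜} {a b : ℝ} (hK : IsCompact K) (hKx₀ : K ∈ 𝓝 x₀)
    (hF : ContinuousOn (Function.uncurry F) (K ×ˢ [[a, b]]))
    (hF' : ContinuousOn (Function.uncurry F') (K ×ˢ [[a, b]]))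
    (hdiff : ∀ x ∈ K, ∀ t ∈ [[a, b]], HasDerivAt (F · t) (F' x t) x) :
    HasDerivAt (fun x => ∫ t in a..b, F x t) (∫ t in a..b, F' x₀ t) x₀ := by
  have hslice : ∀ {G : 𝕜 → ℝ → E}, ContinuousOn (Function.uncurry G) (K ×ˢ [[a, b]]) →
      ∀ x ∈ K, IntervalIntegrable (G x) volume a b := fun hG x hx =>
    (hG.comp (continuousOn_const.prodMk continuousOn_id) fun _ ht => ⟨hx, ht⟩).intervalIntegrable
  obtain ⟨C, hC⟩ := (hK.prod isCompact_uIcc).exists_bound_of_continuousOn hF'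
  refine (hasDerivAt_integral_of_dominated_loc_of_deriv_le (bound := fun _ => C) hKx₀
    ?_ (hslice hF x₀ (mem_of_mem_nhds hKx₀))
    (hslice hF' x₀ (mem_of_mem_nhds hKx₀)).def'.aestronglyMeasurable
    ?_ intervalIntegrable_const ?_).2
  · filter_upwards [hKx₀] with x hx using (hslice hF x hx).def'.aestronglyMeasurable
  · exact ae_of_all _ fun t ht x hx => hC (x, t) ⟨hx, uIoc_subset_uIcc ht⟩
  · exact ae_of_all _ fun t ht x hx => hdiff x hx t (uIoc_subset_uIcc ht)

lemma continuousOn_frakGIntegrand_add_I_mul (m l : ℕ) (hm : m ≠ 0) (a₁ a₂ : ℤ)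
    {S : Set (ℝ × ℝ)} (hS : ∀ p ∈ S, p.1 ≠ 0) :
    ContinuousOn (fun p : ℝ × ℝ => frakGIntegrand m l a₁ a₂ (p.2 + I * p.1)) S := fun p hp =>
  ((continuousAt_frakGIntegrand m l hm a₁ a₂ (by simpa using hS p hp)).comp
    (by fun_prop)).continuousWithinAt

lemma continuous_frakGIntegrand_add_I_mul (m l : ℕ) (hm : m ≠ 0) (a₁ a₂ : ℤ) {s : ℝ}
    (hs : s ≠ 0) : Continuous (fun v : ℝ => frakGIntegrand m l a₁ a₂ (v + I * s)) :=
  continuous_iff_continuousAt.mpr fun _ =>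
    (continuousAt_frakGIntegrand m l hm a₁ a₂ (by simpa using hs)).comp (by fun_prop)

open Metric intervalIntegral in
lemma hasDerivAt_frakG (m l : ℕ) (hm : m ≠ 0) (a₁ a₂ : ℤ) (u : ℝ) {s : ℝ} (hs : s ≠ 0) :
    HasDerivAt (fun t => frakG m l a₁ a₂ u t)
      (I * (-(a₁ : ℂ) / m * frakG m l (a₁ + m) a₂ u s +
        (a₂ : ℂ) / m * frakG m l a₁ (a₂ + m) u s)) s := by
  have hK : ∀ t ∈ closedBall s (|s| / 2), t ≠ 0 := by
    intro t ht h0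
    rw [mem_closedBall, h0, dist_zero_left, Real.norm_eq_abs] at ht
    linarith [abs_pos.mpr hs]
  have hKI : ∀ p ∈ closedBall s (|s| / 2) ×ˢ Set.uIcc (-1) u, p.1 ≠ 0 := fun p hp => hK p.1 hp.1
  have hderiv := hasDerivAt_intervalIntegral_of_continuousOn (a := -1) (b := u)
    (F := fun (t v : ℝ) => frakGIntegrand m l a₁ a₂ (v + I * t))
    (F' := fun (t v : ℝ) => I * (-(a₁ : ℂ) / m * frakGIntegrand m l (a₁ + m) a₂ (v + I * t) +
        (a₂ : ℂ) / m * frakGIntegrand m l a₁ (a₂ + m) (v + I * t)))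
    (isCompact_closedBall s (|s| / 2)) (closedBall_mem_nhds s (by positivity : 0 < |s| / 2))
    (continuousOn_frakGIntegrand_add_I_mul m l hm a₁ a₂ hKI)
    (continuousOn_const.fun_mul ((continuousOn_const.fun_mul
      (continuousOn_frakGIntegrand_add_I_mul m l hm _ _ hKI)).fun_add (continuousOn_const.fun_mul
      (continuousOn_frakGIntegrand_add_I_mul m l hm _ _ hKI))))
    (fun t ht v _ => hasDerivAt_frakGIntegrand_vertical m l hm a₁ a₂ v (hK t ht))
  have hint : ∀ b₁ b₂ : ℤ, IntervalIntegrable (fun v : ℝ => frakGIntegrand m l b₁ b₂ (v + I * s))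
      MeasureTheory.volume (-1) u := fun b₁ b₂ =>
    (continuous_frakGIntegrand_add_I_mul m l hm b₁ b₂ hs).intervalIntegrable _ _
  simp only [frakG_eq_integral_frakGIntegrand]
  rwa [integral_const_mul, integral_add ((hint _ _).const_mul _) ((hint _ _).const_mul _),
    integral_const_mul, integral_const_mul] at hderiv

lemma genBinom_zero (x : ℝ) : genBinom x 0 = 1 := by simp [genBinom]

lemma succ_mul_genBinom_succ (x : ℝ) (j : ℕ) :
    (j + 1) * genBinom x (j + 1) = genBinom x j * (x - j) := by
  rw [genBinom, genBinom, Finset.prod_range_succ, Nat.factorial_succ]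
  push_cast
  field_simp

open Finset Nat in
lemma sum_antidiagonal_genBinom_mul_shift (x y : ℝ) (T : ℕ → ℕ → ℂ) (n : ℕ) :
    ∑ p ∈ antidiagonal n, (-1 : ℂ) ^ p.2 * genBinom x p.1 * genBinom y p.2 *
        ((x - p.1) * T (p.1 + 1) p.2 - (y - p.2) * T p.1 (p.2 + 1)) =
      (n + 1) * ∑ p ∈ antidiagonal (n + 1),
        (-1 : ℂ) ^ p.2 * genBinom x p.1 * genBinom y p.2 * T p.1 p.2 := by
  set d : ℕ × ℕ → ℂ := fun p => (-1 : ℂ) ^ p.2 * genBinom x p.1 * genBinom y p.2 * T p.1 p.2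
  have hrec : ∀ (z : ℝ) (j : ℕ), ((j : ℂ) + 1) * genBinom z (j + 1) = genBinom z j * (z - j) :=
    fun z j => by exact_mod_cast succ_mul_genBinom_succ z j
  calc _ = ∑ p ∈ antidiagonal n,
          (((p.1 + 1 : ℕ) : ℂ) * d (p.1 + 1, p.2) + ((p.2 + 1 : ℕ) : ℂ) * d (p.1, p.2 + 1)) := by
        refine sum_congr rfl fun p _ => ?_
        simp only [d, pow_succ]
        push_cast
        linear_combination (-1 : ℂ) ^ p.2 * (genBinom y p.2 * T (p.1 + 1) p.2 * (hrec x p.1).symm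
          - genBinom x p.1 * T p.1 (p.2 + 1) * (hrec y p.2).symm)
    _ = ∑ p ∈ antidiagonal (n + 1), ((p.1 : ℂ) * d p + (p.2 : ℂ) * d p) := by
        rw [sum_add_distrib, sum_add_distrib, sum_antidiagonal_succ, sum_antidiagonal_succ']
        simp
    _ = _ := by
        rw [mul_sum]
        refine sum_congr rfl fun p hp => ?_
        rw [← add_mul, ← Nat.cast_add, mem_antidiagonal.mp hp]
        push_cast
        rfl

lemma hasDerivAt_frakG_shift (m l : ℕ) (hm : m ≠ 0) (a₁ a₂ : ℤ) (u : ℝ) {s : ℝ} (hs : s ≠ 0)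
    (p q : ℕ) :
    HasDerivAt (fun t => frakG m l (a₁ + p * m) (a₂ + q * m) u t)
      (I * (((-(a₁ : ℝ) / m : ℝ) - p) * frakG m l (a₁ + (p + 1 : ℕ) * m) (a₂ + q * m) u s -
        ((-(a₂ : ℝ) / m : ℝ) - q) * frakG m l (a₁ + p * m) (a₂ + (q + 1 : ℕ) * m) u s)) s := by
  have h := hasDerivAt_frakG m l hm (a₁ + p * m) (a₂ + q * m) u hs
  rw [show a₁ + p * m + m = a₁ + (p + 1 : ℕ) * m by push_cast; ring,
    show a₂ + q * m + m = a₂ + (q + 1 : ℕ) * m by push_cast; ring] at h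
  refine h.congr_deriv ?_
  have hmC : (m : ℂ) ≠ 0 := Nat.cast_ne_zero.mpr hm
  push_cast
  field_simp
  ring

open Finset Nat in
lemma iteratedDeriv_frakG_eq_sum_antidiagonal (m l : ℕ) (hm : m ≠ 0) (a₁ a₂ : ℤ) (u : ℝ)
    (n : ℕ) {s : ℝ} (hs : s ≠ 0) :
    iteratedDeriv n (fun t => frakG m l a₁ a₂ u t) s =
      I ^ n * n ! * ∑ p ∈ antidiagonal n, (-1 : ℂ) ^ p.2 * genBinom (-(a₁ : ℝ) / m) p.1 *
        genBinom (-(a₂ : ℝ) / m) p.2 * frakG m l (a₁ + p.1 * m) (a₂ + p.2 * m) u s := by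
  induction n generalizing s with
  | zero => simp [genBinom_zero]
  | succ n ih =>
    have hev : iteratedDeriv n (fun t => frakG m l a₁ a₂ u t) =ᶠ[𝓝 s] _ :=
      (eventually_ne_nhds hs).mono fun t ht => ih ht
    rw [iteratedDeriv_succ, hev.deriv_eq, ((HasDerivAt.fun_sum fun p _ =>
      (hasDerivAt_frakG_shift m l hm a₁ a₂ u hs p.1 p.2).const_mul _).const_mul _).deriv]
    simp_rw [mul_left_comm _ I, ← mul_sum]
    rw [sum_antidiagonal_genBinom_mul_shift _ _
      (fun p q => frakG m l (a₁ + p * m) (a₂ + q * m) u s), factorial_succ]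
    push_cast
    ring

theorem stmt16_general (m : ℕ) (hm : 2 ≤ m) (l : ℕ) (n : ℕ) (a₁ a₂ : ℤ)
    (u s : ℝ) (hs0 : s ≠ 0) :
    iteratedDeriv n (fun t => frakG m l a₁ a₂ u t) s =
      Complex.I ^ n * (Nat.factorial n : ℂ) *
        ∑ j ∈ Finset.range (n + 1), (-1 : ℂ) ^ (n - j) *
          (genBinom (-(a₁ : ℝ) / m) j : ℂ) * (genBinom (-(a₂ : ℝ) / m) (n - j) : ℂ) *
          frakG m l (a₁ + (j : ℤ) * m) (a₂ + ((n - j : ℕ) : ℤ) * m) u s := by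
  rw [iteratedDeriv_frakG_eq_sum_antidiagonal m l (by omega) a₁ a₂ u n hs0,
    Finset.Nat.sum_antidiagonal_eq_sum_range_succ_mk]

theorem stmt16 (m : ℕ) (hm : 2 ≤ m) (l : ℕ) (hl : l < m) (n : ℕ) (hn : 1 ≤ n) (a₁ a₂ : ℤ)
    (u s : ℝ) (hu : u ∈ Set.Icc (-1:ℝ) 1) (hs : s ∈ Set.Icc (-1:ℝ) 1) (hs0 : s ≠ 0) :
    iteratedDeriv n (fun t => frakG m l a₁ a₂ u t) s =
      Complex.I ^ n * (Nat.factorial n : ℂ) *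
        ∑ j ∈ Finset.range (n + 1), (-1 : ℂ) ^ (n - j) *
          (genBinom (-(a₁ : ℝ) / m) j : ℂ) * (genBinom (-(a₂ : ℝ) / m) (n - j) : ℂ) *
          frakG m l (a₁ + (j : ℤ) * m) (a₂ + ((n - j : ℕ) : ℤ) * m) u s :=
  stmt16_general m hm l n a₁ a₂ u s hs0
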